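/- Tsirelson's bound with unique maximizer and CHSH violation: for every c ∈ Q one has c₁₁ + c₁₂ + c₂₁ − c₂₂ ≤ 2√2; the point c* := (1/√2)·(1,1,1,−1) lies in Q and attains equality, it is the unique point of Q attaining equality, and c* does not lie in the classical polytope 𝒞 (indeed c*₁₁ + c*₁₂ + c*₂₁ − c*₂₂ = 2√2 > 2, while every c ∈ 𝒞 satisfies c₁₁ + c₁₂ + c₂₁ − c₂₂ ≤ 2). -/

import Mathlib

/-!
Think of `Cmat c u v` as the Gram matrix of unit vectors `a₁, a₂, b₁, b₂` with `cᵢⱼ = ⟨aᵢ, bⱼ⟩`.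
Tsirelson's bound is the sum-of-squares identity
`‖√2 a₁ - b₁ - b₂‖² + ‖√2 a₂ - b₁ + b₂‖² = 2√2 (2√2 - (c₁₁ + c₁₂ + c₂₁ - c₂₂))`,
read off the quadratic form of `Cmat c u v`. At equality both vectors lie in the kernel of the
positive semidefinite matrix, and the resulting linear equations force `v = 0` and `c = c*`.
The point `c*` itself is realised by orthonormal `a₁, a₂` and `b₁, b₂ = (a₁ ± a₂)/√2`.
Classically the CHSH value is at most `2` at each even sign vector, hence on their convex hull.
-/

def Cmat (c : Fin 4 → ℝ) (u v : ℝ) : Matrix (Fin 4) (Fin 4) ℝ :=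
  !![1, u, c 0, c 1;
     u, 1, c 2, c 3;
     c 0, c 2, 1, v;
     c 1, c 3, v, 1]

def Qbody : Set (Fin 4 → ℝ) := {c | ∃ u v : ℝ, (Cmat c u v).PosSemidef}

/-- The classical polytope: convex hull of the eight even sign vectors. -/
def Cpoly : Set (Fin 4 → ℝ) :=
  convexHull ℝ {e : Fin 4 → ℝ | (∀ i, e i = 1 ∨ e i = -1) ∧ e 0 * e 1 * e 2 * e 3 = 1}

/-- The maximally CHSH-violating correlation `c* = (1/√2)·(1,1,1,−1)`. -/
noncomputable def cstar : Fin 4 → ℝ :=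
  (1 / Real.sqrt 2) • ![1, 1, 1, -1]

open Matrix

def chsh (c : Fin 4 → ℝ) : ℝ := c 0 + c 1 + c 2 - c 3

lemma Cmat_isHermitian (c : Fin 4 → ℝ) (u v : ℝ) : (Cmat c u v).IsHermitian := by
  ext i j
  fin_cases i <;> fin_cases j <;> rfl

lemma dotProduct_Cmat_mulVec (c : Fin 4 → ℝ) (u v : ℝ) (x : Fin 4 → ℝ) :
    star x ⬝ᵥ Cmat c u v *ᵥ x =
      x 0 ^ 2 + x 1 ^ 2 + x 2 ^ 2 + x 3 ^ 2 + 2 * u * x 0 * x 1 + 2 * v * x 2 * x 3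
        + 2 * c 0 * x 0 * x 2 + 2 * c 1 * x 0 * x 3 + 2 * c 2 * x 1 * x 2
        + 2 * c 3 * x 1 * x 3 := by
  simp only [dotProduct, Pi.star_apply, star_trivial, mulVec, Cmat, of_apply, cons_val',
    cons_val_fin_one, Fin.sum_univ_four, cons_val_zero, cons_val_one, cons_val]
  ring

noncomputable def tsirelsonVec₁ : Fin 4 → ℝ := ![√2, 0, -1, -1]

noncomputable def tsirelsonVec₂ : Fin 4 → ℝ := ![0, √2, -1, 1]

lemma quadForm_tsirelsonVec_add (c : Fin 4 → ℝ) (u v : ℝ) :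
    star tsirelsonVec₁ ⬝ᵥ Cmat c u v *ᵥ tsirelsonVec₁
      + star tsirelsonVec₂ ⬝ᵥ Cmat c u v *ᵥ tsirelsonVec₂ = 2 * √2 * (2 * √2 - chsh c) := by
  have hsq : √2 ^ 2 = 2 := Real.sq_sqrt zero_le_two
  rw [dotProduct_Cmat_mulVec, dotProduct_Cmat_mulVec]
  simp only [tsirelsonVec₁, tsirelsonVec₂, chsh, cons_val_zero, cons_val_one, cons_val]
  linear_combination (-2) * hsq

lemma chsh_le_of_mem_Qbody {c : Fin 4 → ℝ} (hc : c ∈ Qbody) : chsh c ≤ 2 * √2 := by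
  obtain ⟨u, v, hM⟩ := hc
  have hsum := add_nonneg (hM.dotProduct_mulVec_nonneg tsirelsonVec₁)
    (hM.dotProduct_mulVec_nonneg tsirelsonVec₂)
  rw [quadForm_tsirelsonVec_add] at hsum
  exact sub_nonneg.mp (nonneg_of_mul_nonneg_right hsum (by positivity))

lemma eq_cstar_of_Cmat_mulVec_tsirelsonVec {c : Fin 4 → ℝ} {u v : ℝ}
    (h₁ : Cmat c u v *ᵥ tsirelsonVec₁ = 0) (h₂ : Cmat c u v *ᵥ tsirelsonVec₂ = 0) :
    c = cstar := by
  have hsq : √2 * √2 = 2 := Real.mul_self_sqrt zero_le_two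
  have hs : √2 ≠ 0 := by positivity
  have e₀ := congrFun h₁ 0
  have e₂ := congrFun h₁ 2
  have e₃ := congrFun h₁ 3
  have f₂ := congrFun h₂ 2
  have f₃ := congrFun h₂ 3
  simp only [mulVec, dotProduct, Pi.zero_apply, Cmat, tsirelsonVec₁, tsirelsonVec₂,
    Fin.sum_univ_four, of_apply, cons_val', cons_val_fin_one, cons_val_zero, cons_val_one,
    cons_val] at e₀ e₂ e₃ f₂ f₃
  have hv : v = 0 := by linear_combination (-(e₂ + e₃ + √2 * e₀) + hsq) / 2
  subst hv
  ext i
  fin_cases i <;>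
    simp only [cstar, Fin.reduceFinMk, Fin.zero_eta, Fin.mk_one, Pi.smul_apply, smul_eq_mul,
      cons_val_zero, cons_val_one, cons_val] <;> field_simp <;> linarith

lemma eq_cstar_of_mem_Qbody_of_chsh_eq {c : Fin 4 → ℝ} (hc : c ∈ Qbody)
    (he : chsh c = 2 * √2) : c = cstar := by
  obtain ⟨u, v, hM⟩ := hc
  have hsum := quadForm_tsirelsonVec_add c u v
  rw [he, sub_self, mul_zero, add_eq_zero_iff_of_nonneg (hM.dotProduct_mulVec_nonneg _)
    (hM.dotProduct_mulVec_nonneg _)] at hsum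
  exact eq_cstar_of_Cmat_mulVec_tsirelsonVec ((hM.dotProduct_mulVec_zero_iff _).mp hsum.1)
    ((hM.dotProduct_mulVec_zero_iff _).mp hsum.2)

lemma chsh_cstar : chsh cstar = 2 * √2 := by
  have hsq : √2 * √2 = 2 := Real.mul_self_sqrt zero_le_two
  simp only [chsh, cstar, Pi.smul_apply, smul_eq_mul, cons_val_zero, cons_val_one, cons_val]
  field_simp
  linarith

lemma cstar_mem_Qbody : cstar ∈ Qbody := by
  have hsq : √2 ^ 2 = 2 := Real.sq_sqrt zero_le_two
  refine ⟨0, 0, .of_dotProduct_mulVec_nonneg (Cmat_isHermitian _ _ _) fun x => ?_⟩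
  have hs : √2 ≠ 0 := by positivity
  have sos : star x ⬝ᵥ Cmat cstar 0 0 *ᵥ x =
      (x 0 + (x 2 + x 3) / √2) ^ 2 + (x 1 + (x 2 - x 3) / √2) ^ 2 := by
    rw [dotProduct_Cmat_mulVec]
    simp only [cstar, Pi.smul_apply, smul_eq_mul, cons_val_zero, cons_val_one, cons_val]
    field_simp
    linear_combination (x 2 ^ 2 + x 3 ^ 2) * hsq
  rw [sos]
  positivity

lemma isLinearMap_chsh : IsLinearMap ℝ chsh where
  map_add x y := by simp only [chsh, Pi.add_apply]; ring
  map_smul a x := by simp only [chsh, Pi.smul_apply, smul_eq_mul]; ring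

lemma chsh_le_two_of_mem_Cpoly {c : Fin 4 → ℝ} (hc : c ∈ Cpoly) : chsh c ≤ 2 := by
  refine convexHull_min ?_ (convex_halfSpace_le isLinearMap_chsh 2) hc
  rintro e ⟨hsign, hprod⟩
  rcases hsign 0 with h0 | h0 <;> rcases hsign 1 with h1 | h1 <;>
    rcases hsign 2 with h2 | h2 <;> rcases hsign 3 with h3 | h3 <;>
    (revert hprod; norm_num [chsh, h0, h1, h2, h3])

theorem stmt19 :
    (∀ c ∈ Qbody, c 0 + c 1 + c 2 - c 3 ≤ 2 * Real.sqrt 2) ∧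
    cstar ∈ Qbody ∧
    cstar 0 + cstar 1 + cstar 2 - cstar 3 = 2 * Real.sqrt 2 ∧
    (∀ c ∈ Qbody, c 0 + c 1 + c 2 - c 3 = 2 * Real.sqrt 2 → c = cstar) ∧
    cstar ∉ Cpoly ∧
    (2 : ℝ) < 2 * Real.sqrt 2 ∧
    (∀ c ∈ Cpoly, c 0 + c 1 + c 2 - c 3 ≤ 2) := by
  have two_lt : (2 : ℝ) < 2 * √2 := by linarith [Real.one_lt_sqrt_two]
  refine ⟨fun _ => chsh_le_of_mem_Qbody, cstar_mem_Qbody, chsh_cstar,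
    fun _ => eq_cstar_of_mem_Qbody_of_chsh_eq, fun hmem => ?_, two_lt,
    fun _ => chsh_le_two_of_mem_Cpoly⟩
  have := chsh_le_two_of_mem_Cpoly hmem
  rw [chsh_cstar] at this
  linarith
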